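/- arXiv:2106.05560 — 3 statements merged into one kernel-verified Lean document; each statement's English description precedes it below -/
import Mathlib

section
/- Let T > 0 and L > 0. Let Z be a real random variable with density g_T(x) = φ(x/√T)/(√T · Φ(L/√T)) · 1_{(−∞,L]}(x) (a centered Gaussian of variance T conditioned to be at most L), and let U be uniformly distributed on [0,1], independent of Z. Then the conditional law of Z given the event {U ≤ 1 − exp(2L(Z − L)/T)} is absolutely continuous with density f_T(x) = (1/√T)(φ(x/√T) − φ((x−2L)/√T))/(Φ(L/√T) − Φ(−L/√T)) · 1_{(−∞,L]}(x); that is, the rejection sampler with proposal g_T and acceptance probability 1 − exp(2L(z−L)/T) produces exactly the law of a standard Brownian motion at time T conditioned on its first passage time through L being larger than T. -/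
open MeasureTheory ProbabilityTheory

/-- The standard Gaussian density. -/
noncomputable def stdGaussianDensity (x : ℝ) : ℝ :=
  (Real.sqrt (2 * Real.pi))⁻¹ * Real.exp (-x ^ 2 / 2)

/-- The standard Gaussian cumulative distribution function. -/
noncomputable def stdGaussianCDF (x : ℝ) : ℝ :=
  ∫ u in Set.Iic x, stdGaussianDensity u

lemma sgd_pos (x : ℝ) : 0 < stdGaussianDensity x := by
  unfold stdGaussianDensity
  positivity

lemma sgd_meas : Measurable stdGaussianDensity := by
  unfold stdGaussianDensity; fun_prop

lemma sgd_integrable : Integrable stdGaussianDensity := by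
  have h : Integrable (fun x : ℝ => Real.exp (-(1/2 : ℝ) * x ^ 2)) :=
    integrable_exp_neg_mul_sq (by norm_num)
  have h2 := h.const_mul (Real.sqrt (2 * Real.pi))⁻¹
  refine h2.congr ?_
  filter_upwards with x
  unfold stdGaussianDensity
  ring_nf

lemma sgd_support : Function.support stdGaussianDensity = Set.univ := by
  ext y; simp [Function.mem_support, (sgd_pos y).ne']

lemma cdf_pos (x : ℝ) : 0 < stdGaussianCDF x := by
  unfold stdGaussianCDF
  rw [setIntegral_pos_iff_support_of_nonneg_ae
    (Filter.Eventually.of_forall fun y => (sgd_pos y).le) sgd_integrable.integrableOn]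
  rw [sgd_support, Set.univ_inter]
  simp [Real.volume_Iic]

lemma cdf_strict {x y : ℝ} (h : x < y) : stdGaussianCDF x < stdGaussianCDF y := by
  unfold stdGaussianCDF
  have hunion : Set.Iic x ∪ Set.Ioc x y = Set.Iic y := Set.Iic_union_Ioc_eq_Iic h.le
  have hdisj : Disjoint (Set.Iic x) (Set.Ioc x y) := by
    rw [Set.disjoint_left]
    rintro a ha ⟨h1, _⟩
    exact absurd ha (not_le.2 h1)
  have hsplit : ∫ u in Set.Iic y, stdGaussianDensity u =
      (∫ u in Set.Iic x, stdGaussianDensity u) + ∫ u in Set.Ioc x y, stdGaussianDensity u := by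
    rw [← hunion, setIntegral_union hdisj measurableSet_Ioc
      sgd_integrable.integrableOn sgd_integrable.integrableOn]
  rw [hsplit]
  have hpos : 0 < ∫ u in Set.Ioc x y, stdGaussianDensity u := by
    rw [setIntegral_pos_iff_support_of_nonneg_ae
      (Filter.Eventually.of_forall fun z => (sgd_pos z).le) sgd_integrable.integrableOn]
    rw [sgd_support, Set.univ_inter, Real.volume_Ioc]
    simp [h]
  linarith

/-- Substitution: `∫_{Iic b} φ((x-c)/√T) dx = √T · Φ((b-c)/√T)`. -/
lemma integral_sgd_shift (T c b : ℝ) (hT : 0 < T) :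
    ∫ x in Set.Iic b, stdGaussianDensity ((x - c) / Real.sqrt T)
      = Real.sqrt T * stdGaussianCDF ((b - c) / Real.sqrt T) := by
  set s := Real.sqrt T with hs_def
  have hs : 0 < s := Real.sqrt_pos.2 hT
  have key : ∀ x : ℝ, (Set.Iic b).indicator (fun x => stdGaussianDensity ((x - c) / s)) x
      = (Set.Iic ((b - c) / s)).indicator stdGaussianDensity ((x - c) / s) := by
    intro x
    have hiff : x ≤ b ↔ (x - c) / s ≤ (b - c) / s := by
      rw [div_le_div_iff_of_pos_right hs]
      constructor <;> intro hh <;> linarith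
    by_cases hx : x ≤ b
    · rw [Set.indicator_apply, Set.indicator_apply, if_pos (Set.mem_Iic.2 hx),
        if_pos (Set.mem_Iic.2 (hiff.1 hx))]
    · rw [Set.indicator_apply, Set.indicator_apply, if_neg (by simpa using hx),
        if_neg (by simp only [Set.mem_Iic]; exact fun hh => hx (hiff.2 hh))]
  calc ∫ x in Set.Iic b, stdGaussianDensity ((x - c) / s)
      = ∫ x, (Set.Iic b).indicator (fun x => stdGaussianDensity ((x - c) / s)) x := by
        rw [integral_indicator measurableSet_Iic]
    _ = ∫ x, (Set.Iic ((b - c) / s)).indicator stdGaussianDensity ((x - c) / s) := by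
        simp_rw [key]
    _ = ∫ y, (Set.Iic ((b - c) / s)).indicator stdGaussianDensity (y / s) :=
        integral_sub_right_eq_self
          (fun y => (Set.Iic ((b - c) / s)).indicator stdGaussianDensity (y / s)) c
    _ = |s| • ∫ y, (Set.Iic ((b - c) / s)).indicator stdGaussianDensity y :=
        MeasureTheory.Measure.integral_comp_div _ s
    _ = s * stdGaussianCDF ((b - c) / s) := by
        rw [abs_of_pos hs, smul_eq_mul, integral_indicator measurableSet_Iic]
        rfl

theorem rejection_sampler_conditioned_brownian
    {Ω : Type*} [MeasurableSpace Ω] (P : Measure Ω) [IsProbabilityMeasure P]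
    (T L : ℝ) (hT : 0 < T) (hL : 0 < L)
    (Z U : Ω → ℝ) (hZmeas : Measurable Z) (hUmeas : Measurable U)
    (g f : ℝ → ℝ)
    (hg : ∀ x, g x = if x ≤ L then
      stdGaussianDensity (x / Real.sqrt T) /
        (Real.sqrt T * stdGaussianCDF (L / Real.sqrt T))
      else 0)
    (hf : ∀ x, f x = if x ≤ L then
      (1 / Real.sqrt T) *
        (stdGaussianDensity (x / Real.sqrt T) -
          stdGaussianDensity ((x - 2 * L) / Real.sqrt T)) /
        (stdGaussianCDF (L / Real.sqrt T) - stdGaussianCDF (-L / Real.sqrt T))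
      else 0)
    (hZlaw : Measure.map Z P = volume.withDensity fun x => ENNReal.ofReal (g x))
    (hUlaw : Measure.map U P = volume.restrict (Set.Icc (0:ℝ) 1))
    (hindep : IndepFun Z U P) :
    Measure.map Z (P[|{ω | U ω ≤ 1 - Real.exp (2 * L * (Z ω - L) / T)}]) =
      volume.withDensity fun x => ENNReal.ofReal (f x) := by
  have hs : 0 < Real.sqrt T := Real.sqrt_pos.2 hT
  set s := Real.sqrt T with hs_def
  have hs2 : s ^ 2 = T := Real.sq_sqrt hT.le
  set Φa := stdGaussianCDF (L / s) with hΦa_def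
  set Φma := stdGaussianCDF (-L / s) with hΦma_def
  have hΦa : 0 < Φa := cdf_pos _
  have hdiff : 0 < Φa - Φma := by
    have hlt : (-L / s) < L / s := by
      have : 0 < L / s := div_pos hL hs
      have : -L / s = -(L / s) := by ring
      rw [this]; linarith [div_pos hL hs]
    have := cdf_strict hlt
    rw [← hΦma_def, ← hΦa_def] at this
    linarith
  set h : ℝ → ℝ := fun x => 1 - Real.exp (2 * L * (x - L) / T) with hh_def
  set c : ℝ := (Φa - Φma) / Φa with hc_def
  have hc : 0 < c := div_pos hdiff hΦa
  have hmeas_h : Measurable h := by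
    rw [hh_def]; fun_prop
  have hgmeas : Measurable g := by
    have hgind : g = (Set.Iic L).indicator
        (fun x => stdGaussianDensity (x / s) / (s * Φa)) := by
      funext x; rw [hg, Set.indicator_apply]; rfl
    rw [hgind]
    exact ((sgd_meas.comp (measurable_id.div_const s)).div_const _).indicator measurableSet_Iic
  have hfind : f = (Set.Iic L).indicator
      (fun x => (1 / s) * (stdGaussianDensity (x / s)
        - stdGaussianDensity ((x - 2 * L) / s)) / (Φa - Φma)) := by
    funext x; rw [hf, Set.indicator_apply]; rfl
  have hfmeas : Measurable f := by
    rw [hfind]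
    exact ((((sgd_meas.comp (measurable_id.div_const s)).sub
      (sgd_meas.comp ((measurable_id.sub_const (2 * L)).div_const s))).const_mul
        _).div_const _).indicator measurableSet_Iic
  have hg_nonneg : ∀ x, 0 ≤ g x := by
    intro x; rw [hg]
    split
    · exact div_nonneg (sgd_pos _).le (mul_nonneg hs.le hΦa.le)
    · exact le_rfl
  -- key exponential identity
  have hexp : ∀ x : ℝ, stdGaussianDensity (x / s) * Real.exp (2 * L * (x - L) / T)
      = stdGaussianDensity ((x - 2 * L) / s) := by
    intro x
    unfold stdGaussianDensity
    rw [mul_assoc, ← Real.exp_add]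
    congr 1
    rw [div_pow, div_pow, hs2]
    field_simp
    ring
  have hf_nonneg : ∀ x, 0 ≤ f x := by
    intro x; rw [hf]
    split
    · rename_i hx
      have hx2 : x ^ 2 ≤ (x - 2 * L) ^ 2 := by nlinarith
      have hdivle : x ^ 2 / T ≤ (x - 2 * L) ^ 2 / T := by gcongr
      have hD : stdGaussianDensity ((x - 2 * L) / s) ≤ stdGaussianDensity (x / s) := by
        unfold stdGaussianDensity
        refine mul_le_mul_of_nonneg_left ?_ (by positivity)
        apply Real.exp_le_exp.2
        rw [div_pow, div_pow, hs2]
        linarith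
      exact div_nonneg (mul_nonneg (by positivity) (by linarith)) hdiff.le
    · exact le_rfl
  have hh_le1 : ∀ x, h x ≤ 1 := by
    intro x; rw [hh_def]
    have := Real.exp_pos (2 * L * (x - L) / T)
    simp only
    linarith
  have hh_nonneg : ∀ x, x ≤ L → 0 ≤ h x := by
    intro x hx; rw [hh_def]
    have harg : 2 * L * (x - L) / T ≤ 0 := by
      apply div_nonpos_of_nonpos_of_nonneg _ hT.le
      nlinarith
    have := Real.exp_le_one_iff.2 harg
    simp only
    linarith
  -- pointwise identity  g·h = c·f
  have ghf : ∀ x, g x * h x = c * f x := by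
    intro x
    by_cases hx : x ≤ L
    · have hE := hexp x
      have hlhs : g x * h x = (stdGaussianDensity (x / s)
          - stdGaussianDensity ((x - 2 * L) / s)) / (s * Φa) := by
        rw [hg, if_pos hx, hh_def]
        simp only
        rw [← hE]
        ring
      have hrhs : c * f x = (stdGaussianDensity (x / s)
          - stdGaussianDensity ((x - 2 * L) / s)) / (s * Φa) := by
        rw [hf, if_pos hx, hc_def]
        field_simp
      rw [hlhs, hrhs]
    · rw [hg, if_neg hx, hf, if_neg hx]
      ring
  -- integrability and total mass of f
  have h1int : Integrable (fun x : ℝ => stdGaussianDensity (x / s)) :=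
    sgd_integrable.comp_div hs.ne'
  have h2int : Integrable (fun x : ℝ => stdGaussianDensity ((x - 2 * L) / s)) :=
    h1int.comp_sub_right (2 * L)
  have fInt : Integrable f := by
    rw [hfind]
    exact (((h1int.sub h2int).const_mul (1 / s)).div_const (Φa - Φma)).indicator
      measurableSet_Iic
  have hI1 : ∫ x in Set.Iic L, stdGaussianDensity (x / s) = s * Φa := by
    have := integral_sgd_shift T 0 L hT
    simpa using this
  have hI2 : ∫ x in Set.Iic L, stdGaussianDensity ((x - 2 * L) / s) = s * Φma := by
    have := integral_sgd_shift T (2 * L) L hT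
    rw [this, hΦma_def]
    congr 2
    ring
  have hfint1 : ∫ x, f x = 1 := by
    rw [hfind, integral_indicator measurableSet_Iic]
    rw [integral_div, integral_const_mul,
      integral_sub h1int.integrableOn h2int.integrableOn, hI1, hI2]
    field_simp
  -- the key computation
  have key : ∀ S : Set ℝ, MeasurableSet S →
      P (Z ⁻¹' S ∩ {ω | U ω ≤ h (Z ω)}) = ∫⁻ x in S, ENNReal.ofReal (g x * h x) := by
    intro S hS
    have hjoint : Measure.map (fun ω => (Z ω, U ω)) P
        = (Measure.map Z P).prod (Measure.map U P) :=
      (indepFun_iff_map_prod_eq_prod_map_map hZmeas.aemeasurable hUmeas.aemeasurable).mp hindep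
    set B : Set (ℝ × ℝ) := {p | p.1 ∈ S ∧ p.2 ≤ h p.1} with hB_def
    have hB : MeasurableSet B := by
      have hB' : B = (Prod.fst ⁻¹' S) ∩ {p : ℝ × ℝ | p.2 ≤ h p.1} := rfl
      rw [hB']
      exact (measurable_fst hS).inter
        (measurableSet_le measurable_snd (hmeas_h.comp measurable_fst))
    have hpre : Z ⁻¹' S ∩ {ω | U ω ≤ h (Z ω)} = (fun ω => (Z ω, U ω)) ⁻¹' B := rfl
    rw [hpre, ← Measure.map_apply (hZmeas.prodMk hUmeas) hB, hjoint, Measure.prod_apply hB]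
    have hslice : ∀ x : ℝ, (Measure.map U P) (Prod.mk x ⁻¹' B)
        = S.indicator (fun x => ENNReal.ofReal (h x)) x := by
      intro x
      by_cases hx : x ∈ S
      · have hpre2 : Prod.mk x ⁻¹' B = Set.Iic (h x) := by
          ext u; simp [hB_def, hx, Set.mem_Iic]
        rw [hpre2, hUlaw, Measure.restrict_apply measurableSet_Iic,
          Set.indicator_of_mem hx]
        have hint : Set.Iic (h x) ∩ Set.Icc (0:ℝ) 1 = Set.Icc 0 (h x) := by
          ext u
          simp only [Set.mem_inter_iff, Set.mem_Iic, Set.mem_Icc]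
          constructor
          · rintro ⟨h1, h2, _⟩; exact ⟨h2, h1⟩
          · rintro ⟨h1, h2⟩; exact ⟨h2, h1, h2.trans (hh_le1 x)⟩
        rw [hint, Real.volume_Icc]
        simp
      · have hpre2 : Prod.mk x ⁻¹' B = ∅ := by
          ext u; simp [hB_def, hx]
        simp [hpre2, Set.indicator_of_notMem hx]
    rw [lintegral_congr hslice, lintegral_indicator hS _, hZlaw,
      setLIntegral_withDensity_eq_setLIntegral_mul volume
        hgmeas.ennreal_ofReal hmeas_h.ennreal_ofReal hS]
    apply lintegral_congr
    intro x
    simp only [Pi.mul_apply, Function.comp_apply]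
    rw [ENNReal.ofReal_mul (hg_nonneg x)]
  -- total probability of acceptance
  have hconst_mul : ∀ S : Set ℝ, ∫⁻ x in S, ENNReal.ofReal (g x * h x)
      = ENNReal.ofReal c * ∫⁻ x in S, ENNReal.ofReal (f x) := by
    intro S
    simp_rw [ghf, ENNReal.ofReal_mul hc.le]
    exact lintegral_const_mul _ hfmeas.ennreal_ofReal
  have hA_eq : {ω | U ω ≤ 1 - Real.exp (2 * L * (Z ω - L) / T)}
      = {ω | U ω ≤ h (Z ω)} := rfl
  have hA : MeasurableSet {ω | U ω ≤ h (Z ω)} :=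
    measurableSet_le hUmeas (hmeas_h.comp hZmeas)
  have hPA : P {ω | U ω ≤ h (Z ω)} = ENNReal.ofReal c := by
    have hkey := key Set.univ MeasurableSet.univ
    rw [Set.preimage_univ, Set.univ_inter] at hkey
    rw [hkey, hconst_mul Set.univ, Measure.restrict_univ,
      ← ofReal_integral_eq_lintegral_ofReal fInt (Filter.Eventually.of_forall hf_nonneg),
      hfint1]
    simp
  rw [hA_eq]
  refine Measure.ext fun S hS => ?_
  rw [Measure.map_apply hZmeas hS, cond_apply hA P, Set.inter_comm, key S hS,
    hconst_mul S, hPA, withDensity_apply _ hS, ← mul_assoc,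
    ENNReal.inv_mul_cancel ((ENNReal.ofReal_pos.2 hc).ne') ENNReal.ofReal_ne_top, one_mul]
end

section
/- Let 𝕋 > 0 and κ > 0. Let X = (X_t)_{0≤t≤𝕋} be a stochastic process with continuous paths, let (V_j)_{j≥1} be i.i.d. random variables uniformly distributed on [0, 𝕋] independent of X, let γ : [0,𝕋] × ℝ → ℝ be measurable with 0 ≤ γ(t,x) ≤ κ for all (t,x), and let ψ : ℝ → [0,∞) be bounded measurable. Then ∑_{n≥1} e^{−κ𝕋} (𝕋^{n−1}/(n−1)!) · 𝔼[ψ(X_𝕋) ∏_{j=1}^{n−1} (κ − γ(V_j, X_{V_j}))] = 𝔼[ψ(X_𝕋) · exp(−∫_0^𝕋 γ(s, X_s) ds)]. -/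
/-!
Conditionally on the path of `X`, the times `V 0, …, V (n-1)` are still i.i.d. uniform on `[0, 𝕋]`,
so the `n`-th expectation equals `𝔼[ψ(X_𝕋) (𝕋⁻¹ ∫₀^𝕋 (κ - γ(s, X_s)) ds)ⁿ]`. Against the Poisson
weights `e^{-κ𝕋} 𝕋ⁿ / n!` these sum to `𝔼[ψ(X_𝕋) e^{-κ𝕋} exp(∫₀^𝕋 (κ - γ(s, X_s)) ds)]`, which
is the right-hand side. The conditioning is Fubini for the product law of `(V 0, …, V (n-1))` and
the path; it needs `(s, path) ↦ path s` to be jointly measurable, which holds on paths continuous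
on `[0, 𝕋]`.
-/

open MeasureTheory ProbabilityTheory Set
open scoped Nat Interval

theorem measurable_eval_projIcc {a b : ℝ} (hab : a ≤ b) :
    Measurable fun p : ℝ × {y : ℝ → ℝ // ContinuousOn y (Icc a b)} =>
      p.2.1 (projIcc a b hab p.1) :=
  measurable_uncurry_of_continuous_of_measurable
    (u := fun s (y : {y : ℝ → ℝ // ContinuousOn y (Icc a b)}) => y.1 (projIcc a b hab s))
    (fun y => y.2.comp_continuous (continuous_subtype_val.comp continuous_projIcc)
      fun _ => Subtype.mem _)
    fun _ => (measurable_pi_apply _).comp measurable_subtype_coe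

theorem integral_smul_restrict_Icc {a b : ℝ} (hab : a ≤ b) (f : ℝ → ℝ) :
    ∫ v, f v ∂((ENNReal.ofReal (b - a))⁻¹ • volume.restrict (Icc a b)) =
      (b - a)⁻¹ * ∫ v in a..b, f v := by
  rw [integral_smul_measure, ENNReal.toReal_inv, ENNReal.toReal_ofReal (sub_nonneg.2 hab),
    integral_Icc_eq_integral_Ioc, intervalIntegral.integral_of_le hab, smul_eq_mul]

theorem hasSum_integral_mul_pow_div_factorial {α : Type*} [MeasurableSpace α] {μ : Measure α}
    [IsFiniteMeasure μ] {g a : α → ℝ} (hg : AEStronglyMeasurable g μ)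
    (ha : AEStronglyMeasurable a μ) {C K : ℝ} (hgC : ∀ x, ‖g x‖ ≤ C) (haK : ∀ x, ‖a x‖ ≤ K) :
    HasSum (fun n => ∫ x, g x * (a x ^ n / n !) ∂μ) (∫ x, g x * Real.exp (a x) ∂μ) := by
  refine hasSum_integral_of_dominated_convergence (fun n _ => C * (K ^ n / n !))
    (fun n => hg.mul (by fun_prop)) (fun n => ?_)
    (.of_forall fun _ => (Real.summable_pow_div_factorial K).mul_left C) (integrable_const _)
    (.of_forall fun x => ?_)
  · refine .of_forall fun x => ?_
    rw [norm_mul, norm_div, norm_pow, RCLike.norm_natCast]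
    have hK : 0 ≤ K := (norm_nonneg _).trans (haK x)
    exact mul_le_mul (hgC x) (by gcongr; exact haK x) (by positivity)
      ((norm_nonneg _).trans (hgC x))
  · rw [Real.exp_eq_exp_ℝ]
    exact (NormedSpace.expSeries_div_hasSum_exp (a x)).mul_left (g x)

theorem intervalIntegrable_of_norm_le_const {E : Type*} [NormedAddCommGroup E] {f : ℝ → E}
    {a b K : ℝ} (hf : AEStronglyMeasurable f) (hK : ∀ s ∈ Ι a b, ‖f s‖ ≤ K) :
    IntervalIntegrable f volume a b :=
  (intervalIntegrable_const (c := K)).mono_fun' hf.restrict <|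
    (ae_restrict_mem measurableSet_uIoc).mono hK

theorem MeasureTheory.StronglyMeasurable.intervalIntegral_prod_right {α E : Type*}
    [MeasurableSpace α] [NormedAddCommGroup E] [NormedSpace ℝ E] {μ : Measure ℝ} [SFinite μ]
    {F : α × ℝ → E} (hF : StronglyMeasurable F) (a b : ℝ) :
    StronglyMeasurable fun x => ∫ s in a..b, F (x, s) ∂μ :=
  hF.integral_prod_right'.sub hF.integral_prod_right'

section Independence

variable {Ω E F : Type*} [MeasurableSpace Ω] [MeasurableSpace E] [MeasurableSpace F]
  {P : Measure Ω}

theorem ProbabilityTheory.IndepFun.integral_comp_eq_integral_integral [IsFiniteMeasure P]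
    {W : Ω → E} {Y : Ω → F} (hWY : IndepFun W Y P) (hW : Measurable W) (hY : Measurable Y)
    {Φ : E × F → ℝ} (hΦ : StronglyMeasurable Φ)
    (hint : Integrable Φ ((P.map W).prod (P.map Y))) :
    ∫ ω, Φ (W ω, Y ω) ∂P = ∫ ω, ∫ w, Φ (w, Y ω) ∂(P.map W) ∂P := by
  have hlaw : P.map (fun ω => (W ω, Y ω)) = (P.map W).prod (P.map Y) :=
    (indepFun_iff_map_prod_eq_prod_map_map hW.aemeasurable hY.aemeasurable).1 hWY
  calc ∫ ω, Φ (W ω, Y ω) ∂P = ∫ p, Φ p ∂((P.map W).prod (P.map Y)) := by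
        rw [← hlaw, integral_map (hW.prodMk hY).aemeasurable hΦ.aestronglyMeasurable]
    _ = ∫ y, ∫ w, Φ (w, y) ∂(P.map W) ∂(P.map Y) := integral_prod_symm Φ hint
    _ = ∫ ω, ∫ w, Φ (w, Y ω) ∂(P.map W) ∂P :=
        integral_map hY.aemeasurable hΦ.integral_prod_left'.aestronglyMeasurable

theorem ProbabilityTheory.iIndepFun.map_fin_eq_pi [IsProbabilityMeasure P] {V : ℕ → Ω → E}
    (hV : ∀ j, Measurable (V j)) (hiid : iIndepFun V P) {μ : Measure E}
    (hlaw : ∀ j, P.map (V j) = μ) (n : ℕ) :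
    P.map (fun ω (j : Fin n) => V j ω) = Measure.pi fun _ => μ := by
  have hpi := (iIndepFun_iff_map_fun_eq_pi_map fun j : Fin n => (hV j).aemeasurable).1
    (hiid.precomp Fin.val_injective)
  rw [hpi]
  simp only [hlaw]

theorem ProbabilityTheory.Indep.indepFun_fin_of_iSup {V : ℕ → Ω → E} {Y : Ω → F}
    (hVY : Indep (⨆ j, MeasurableSpace.comap (V j) inferInstance)
      (MeasurableSpace.comap Y inferInstance) P)
    (n : ℕ) : IndepFun (fun ω (j : Fin n) => V j ω) Y P := by
  rw [IndepFun_iff_Indep]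
  refine indep_of_indep_of_le_left hVY ?_
  rw [MeasurableSpace.pi, MeasurableSpace.comap_iSup]
  exact iSup_le fun j => MeasurableSpace.comap_comp.trans_le
    (le_iSup (fun j : ℕ => MeasurableSpace.comap (V j) inferInstance) j)

theorem integral_mul_prod_eq_integral_mul_pow [IsProbabilityMeasure P] {μ : Measure E}
    {V : ℕ → Ω → E} {Y : Ω → F} (hV : ∀ j, Measurable (V j)) (hY : Measurable Y)
    (hiid : iIndepFun V P) (hlaw : ∀ j, P.map (V j) = μ)
    (hVY : Indep (⨆ j, MeasurableSpace.comap (V j) inferInstance)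
      (MeasurableSpace.comap Y inferInstance) P)
    {g : F → ℝ} {f : E → F → ℝ} (hg : Measurable g) (hf : Measurable (Function.uncurry f))
    {C K : ℝ} (hgC : ∀ y, ‖g y‖ ≤ C) (hfK : ∀ v y, ‖f v y‖ ≤ K) (n : ℕ) :
    ∫ ω, g (Y ω) * ∏ j : Fin n, f (V j ω) (Y ω) ∂P =
      ∫ ω, g (Y ω) * (∫ v, f v (Y ω) ∂μ) ^ n ∂P := by
  have : IsProbabilityMeasure μ := hlaw 0 ▸ Measure.isProbabilityMeasure_map (hV 0).aemeasurable
  set Φ : (Fin n → E) × F → ℝ := fun p => g p.2 * ∏ j, f (p.1 j) p.2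
  have hΦ : Measurable Φ := (hg.comp measurable_snd).mul <| Finset.measurable_prod _ fun j _ =>
    hf.comp (f := fun p : (Fin n → E) × F => (p.1 j, p.2)) (by fun_prop)
  have hΦC : ∀ p, ‖Φ p‖ ≤ C * K ^ n := fun p => by
    rw [norm_mul, norm_prod]
    refine mul_le_mul (hgC _) ?_ (by positivity) ((norm_nonneg _).trans (hgC p.2))
    simpa using Finset.prod_le_prod (s := Finset.univ) (fun j _ => norm_nonneg _)
      fun j _ => hfK (p.1 j) p.2
  have hsplit := (hVY.indepFun_fin_of_iSup n).integral_comp_eq_integral_integral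
    (measurable_pi_lambda _ fun j => hV j) hY hΦ.stronglyMeasurable
    (.of_bound hΦ.aestronglyMeasurable _ (.of_forall hΦC))
  rw [hiid.map_fin_eq_pi hV hlaw n] at hsplit
  refine hsplit.trans (integral_congr_ae (.of_forall fun ω => ?_))
  simp only [Φ]
  rw [integral_const_mul, integral_fintype_prod_eq_prod (fun _ v => f v (Y ω)),
    Finset.prod_const, Finset.card_univ, Fintype.card_fin]

theorem integral_mul_prod_eq_integral_mul_pow_intervalIntegral [IsProbabilityMeasure P]
    {T : ℝ} (hT : 0 ≤ T) {X : ℝ → Ω → ℝ} (hXcont : ∀ ω, ContinuousOn (fun t => X t ω) (Icc 0 T))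
    (hX : ∀ t, Measurable (X t)) {V : ℕ → Ω → ℝ} (hV : ∀ j, Measurable (V j))
    (hiid : iIndepFun V P)
    (hunif : ∀ j, P.map (V j) = (ENNReal.ofReal T)⁻¹ • volume.restrict (Icc 0 T))
    (hVX : Indep (⨆ j, MeasurableSpace.comap (V j) inferInstance)
      (MeasurableSpace.comap (fun ω t => X t ω) MeasurableSpace.pi) P)
    {g : ℝ → ℝ} (hg : Measurable g) {C : ℝ} (hgC : ∀ x, ‖g x‖ ≤ C)
    {f : ℝ → ℝ → ℝ} (hf : Measurable (Function.uncurry f)) {K : ℝ}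
    (hfK : ∀ t ∈ Icc 0 T, ∀ x, ‖f t x‖ ≤ K) (n : ℕ) :
    ∫ ω, g (X T ω) * ∏ j : Fin n, f (V j ω) (X (V j ω) ω) ∂P =
      ∫ ω, g (X T ω) * (T⁻¹ * ∫ s in 0..T, f s (X s ω)) ^ n ∂P := by
  -- Clamping times into `[0, T]` keeps the integrand bounded and, on continuous paths, jointly
  -- measurable; since every `V j` lies in `[0, T]` almost surely, it changes nothing.
  let c : ℝ → ℝ := fun s => projIcc 0 T hT s
  have hc : Continuous c := continuous_subtype_val.comp (continuous_projIcc (h := hT))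
  let Y : Ω → {y : ℝ → ℝ // ContinuousOn y (Icc 0 T)} := fun ω => ⟨fun t => X t ω, hXcont ω⟩
  have hVY : Indep (⨆ j, MeasurableSpace.comap (V j) inferInstance)
      (MeasurableSpace.comap Y inferInstance) P := by
    rwa [Subtype.instMeasurableSpace, MeasurableSpace.comap_comp]
  have hVmem : ∀ᵐ ω ∂P, ∀ j, V j ω ∈ Icc 0 T := ae_all_iff.2 fun j =>
    ae_of_ae_map (hV j).aemeasurable <| by
      rw [hunif j]; exact Measure.ae_smul_measure (ae_restrict_mem measurableSet_Icc) _
  have hfactor := integral_mul_prod_eq_integral_mul_pow hV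
    (measurable_pi_lambda _ hX).subtype_mk hiid hunif hVY
    (g := fun y => g (y.1 T)) (f := fun v y => f (c v) (y.1 (c v)))
    (hg.comp ((measurable_pi_apply T).comp measurable_subtype_coe))
    (hf.comp ((hc.measurable.comp measurable_fst).prodMk (measurable_eval_projIcc hT)))
    (fun _ => hgC _) (fun _ _ => hfK _ (Subtype.mem _) _) n
  calc _ = ∫ ω, g (X T ω) * ∏ j : Fin n, f (c (V j ω)) (X (c (V j ω)) ω) ∂P :=
        integral_congr_ae <| hVmem.mono fun ω hω => by simp only [c, projIcc_of_mem _ (hω _)]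
    _ = _ := hfactor.trans <| integral_congr_ae <| .of_forall fun ω => by
        have hmean := integral_smul_restrict_Icc hT fun v => f (c v) (X (c v) ω)
        rw [sub_zero] at hmean
        simp only [hmean]
        congr 3
        refine intervalIntegral.integral_congr fun s hs => ?_
        rw [uIcc_of_le hT] at hs
        simp only [c, projIcc_of_mem _ hs]

end Independence

theorem poisson_series_exponential_weight_general
    {Ω : Type*} [MeasurableSpace Ω] (P : Measure Ω) [IsProbabilityMeasure P]
    (𝕋 κ : ℝ) (h𝕋 : 0 < 𝕋)
    (X : ℝ → Ω → ℝ)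
    (hXcont : ∀ ω, ContinuousOn (fun t => X t ω) (Set.Icc 0 𝕋))
    (hXmeas : Measurable fun p : ℝ × Ω => X p.1 p.2)
    (V : ℕ → Ω → ℝ) (hVmeas : ∀ j, Measurable (V j))
    (hViid : iIndepFun V P)
    (hVunif : ∀ j, Measure.map (V j) P =
      (ENNReal.ofReal 𝕋)⁻¹ • volume.restrict (Set.Icc (0:ℝ) 𝕋))
    (hVX : Indep (⨆ j, MeasurableSpace.comap (V j) inferInstance)
      (MeasurableSpace.comap (fun ω t => X t ω) MeasurableSpace.pi) P)
    (γ : ℝ → ℝ → ℝ) (hγmeas : Measurable fun p : ℝ × ℝ => γ p.1 p.2)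
    (hγ : ∀ t ∈ Set.Icc (0:ℝ) 𝕋, ∀ x : ℝ, 0 ≤ γ t x ∧ γ t x ≤ κ)
    (ψ : ℝ → ℝ) (hψmeas : Measurable ψ) (hψpos : ∀ x, 0 ≤ ψ x)
    (C : ℝ) (hψbdd : ∀ x, ψ x ≤ C) :
    ∑' n : ℕ,
        Real.exp (-κ * 𝕋) * (𝕋 ^ n / (Nat.factorial n : ℝ)) *
          ∫ ω, ψ (X 𝕋 ω) * ∏ j : Fin n, (κ - γ (V j ω) (X (V j ω) ω)) ∂P =
      ∫ ω, ψ (X 𝕋 ω) * Real.exp (-∫ s in (0:ℝ)..𝕋, γ s (X s ω)) ∂P := by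
  have hγκ : ∀ t ∈ Icc 0 𝕋, ∀ x, ‖γ t x‖ ≤ κ := fun t ht x => by
    rw [Real.norm_eq_abs, abs_of_nonneg (hγ t ht x).1]; exact (hγ t ht x).2
  have hκγ : ∀ t ∈ Icc 0 𝕋, ∀ x, ‖κ - γ t x‖ ≤ κ := fun t ht x => by
    rw [Real.norm_eq_abs, abs_le]; constructor <;> linarith [hγ t ht x]
  have hψC : ∀ x, ‖ψ x‖ ≤ C := fun x => by
    rw [Real.norm_eq_abs, abs_of_nonneg (hψpos x)]; exact hψbdd x
  have hXt : ∀ t, Measurable (X t) := fun t => hXmeas.comp measurable_prodMk_left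
  have hΙ : Ι 0 𝕋 ⊆ Icc 0 𝕋 := by rw [uIoc_of_le h𝕋.le]; exact Ioc_subset_Icc_self
  set A : Ω → ℝ := fun ω => ∫ s in (0:ℝ)..𝕋, (κ - γ s (X s ω))
  have hA : ∀ ω, A ω = κ * 𝕋 - ∫ s in (0:ℝ)..𝕋, γ s (X s ω) := fun ω => by
    have hγX : Measurable fun s => γ s (X s ω) :=
      hγmeas.comp (measurable_id.prodMk (hXmeas.comp measurable_prodMk_right))
    simp only [A, intervalIntegral.integral_sub intervalIntegrable_const
      (intervalIntegrable_of_norm_le_const hγX.aestronglyMeasurable fun s hs => hγκ s (hΙ hs) _),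
      intervalIntegral.integral_const, sub_zero, smul_eq_mul, mul_comm]
  have hAκ : ∀ ω, ‖A ω‖ ≤ κ * 𝕋 := fun ω =>
    (intervalIntegral.norm_integral_le_of_norm_le_const fun s hs => hκγ s (hΙ hs) _).trans_eq
      (by rw [sub_zero, abs_of_pos h𝕋])
  have hκγX : Measurable fun p : Ω × ℝ => κ - γ p.2 (X p.2 p.1) :=
    measurable_const.sub (hγmeas.comp (measurable_snd.prodMk (hXmeas.comp measurable_swap)))
  have hAmeas : StronglyMeasurable A := hκγX.stronglyMeasurable.intervalIntegral_prod_right 0 𝕋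
  have hsum := (hasSum_integral_mul_pow_div_factorial (μ := P)
    (hψmeas.comp (hXt 𝕋)).aestronglyMeasurable hAmeas.aestronglyMeasurable (fun _ => hψC _)
    hAκ).mul_left (Real.exp (-κ * 𝕋))
  convert hsum.tsum_eq using 1
  · refine tsum_congr fun n => ?_
    rw [integral_mul_prod_eq_integral_mul_pow_intervalIntegral h𝕋.le hXcont hXt hVmeas hViid
      hVunif hVX hψmeas hψC (f := fun t x => κ - γ t x) (measurable_const.sub hγmeas) hκγ,
      mul_assoc, ← integral_const_mul]
    congr 2
    funext ω
    simp only [Function.comp_apply, mul_pow, inv_pow, A]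
    field_simp
  · rw [← integral_const_mul]
    refine integral_congr_ae (.of_forall fun ω => ?_)
    simp only [Function.comp_apply, hA, mul_left_comm, ← Real.exp_add]
    ring_nf

theorem poisson_series_exponential_weight
    {Ω : Type*} [MeasurableSpace Ω] (P : Measure Ω) [IsProbabilityMeasure P]
    (𝕋 κ : ℝ) (h𝕋 : 0 < 𝕋) (hκ : 0 < κ)
    (X : ℝ → Ω → ℝ)
    (hXcont : ∀ ω, ContinuousOn (fun t => X t ω) (Set.Icc 0 𝕋))
    (hXmeas : Measurable fun p : ℝ × Ω => X p.1 p.2)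
    (V : ℕ → Ω → ℝ) (hVmeas : ∀ j, Measurable (V j))
    (hViid : iIndepFun V P)
    (hVunif : ∀ j, Measure.map (V j) P =
      (ENNReal.ofReal 𝕋)⁻¹ • volume.restrict (Set.Icc (0:ℝ) 𝕋))
    (hVX : Indep (⨆ j, MeasurableSpace.comap (V j) inferInstance)
      (MeasurableSpace.comap (fun ω t => X t ω) MeasurableSpace.pi) P)
    (γ : ℝ → ℝ → ℝ) (hγmeas : Measurable fun p : ℝ × ℝ => γ p.1 p.2)
    (hγ : ∀ t ∈ Set.Icc (0:ℝ) 𝕋, ∀ x : ℝ, 0 ≤ γ t x ∧ γ t x ≤ κ)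
    (ψ : ℝ → ℝ) (hψmeas : Measurable ψ) (hψpos : ∀ x, 0 ≤ ψ x)
    (C : ℝ) (hψbdd : ∀ x, ψ x ≤ C) :
    ∑' n : ℕ,
        Real.exp (-κ * 𝕋) * (𝕋 ^ n / (Nat.factorial n : ℝ)) *
          ∫ ω, ψ (X 𝕋 ω) * ∏ j : Fin n, (κ - γ (V j ω) (X (V j ω) ω)) ∂P =
      ∫ ω, ψ (X 𝕋 ω) * Real.exp (-∫ s in (0:ℝ)..𝕋, γ s (X s ω)) ∂P :=
  poisson_series_exponential_weight_general P 𝕋 κ h𝕋 X hXcont hXmeas V hVmeas hViid hVunif hVX γ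
    hγmeas hγ ψ hψmeas hψpos C hψbdd
end

section
/- Let r > 1 and define η = −∫_0^1 ln(1 − v/r) dv. Then η > 0 and for every y ≤ −r, ∫_0^1 y² · ln(|y(1−v)+(1−r)v| / |y|) dv ≤ −η y². -/
theorem drift_domination_condition (r : ℝ) (hr : 1 < r)
    (η : ℝ) (hη : η = -∫ v in (0:ℝ)..1, Real.log (1 - v / r)) :
    0 < η ∧
    ∀ y : ℝ, y ≤ -r →
      ∫ v in (0:ℝ)..1, y ^ 2 * Real.log (|y * (1 - v) + (1 - r) * v| / |y|) ≤
        -η * y ^ 2 := by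
  have hr0 : (0:ℝ) < r := by linarith
  have hpos : ∀ v ∈ Set.Icc (0:ℝ) 1, 0 < 1 - v / r := by
    intro v hv
    have : v / r < 1 := by rw [div_lt_one hr0]; linarith [hv.2]
    linarith
  have hcont : ContinuousOn (fun v : ℝ => Real.log (1 - v / r)) (Set.Icc 0 1) := by
    apply ContinuousOn.log
    · fun_prop
    · intro v hv; exact ne_of_gt (hpos v hv)
  have hInt : IntervalIntegrable (fun v : ℝ => Real.log (1 - v / r))
      MeasureTheory.volume 0 1 := by
    apply ContinuousOn.intervalIntegrable
    rwa [Set.uIcc_of_le (by norm_num : (0:ℝ) ≤ 1)]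
  have hηpos : 0 < η := by
    have : 0 < ∫ v in (0:ℝ)..1, -Real.log (1 - v / r) := by
      apply intervalIntegral.intervalIntegral_pos_of_pos_on hInt.neg
      · intro v hv
        have h1 : 0 < 1 - v / r := hpos v ⟨le_of_lt hv.1, le_of_lt hv.2⟩
        have h2 : 1 - v / r < 1 := by
          have : 0 < v / r := div_pos hv.1 hr0
          linarith
        have := Real.log_neg h1 h2
        simp only [Pi.neg_apply]
        linarith
      · norm_num
    rwa [intervalIntegral.integral_neg, ← hη] at this
  refine ⟨hηpos, fun y hy => ?_⟩
  have hy0 : y < 0 := by linarith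
  have hkey : ∀ v ∈ Set.Icc (0:ℝ) 1,
      y ^ 2 * Real.log (|y * (1 - v) + (1 - r) * v| / |y|) ≤
        y ^ 2 * Real.log (1 - v / r) := by
    intro v hv
    have hv0 := hv.1
    have hv1 := hv.2
    have hexpr : y * (1 - v) + (1 - r) * v < 0 := by
      have h1 : y * (1 - v) ≤ -r * (1 - v) :=
        mul_le_mul_of_nonneg_right hy (by linarith)
      nlinarith
    have habs1 : |y * (1 - v) + (1 - r) * v| = -(y * (1 - v) + (1 - r) * v) :=
      abs_of_neg hexpr
    have habs2 : |y| = -y := abs_of_neg hy0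
    have hratio_pos : 0 < -(y * (1 - v) + (1 - r) * v) / (-y) :=
      div_pos (by linarith) (by linarith)
    have hratio_le : -(y * (1 - v) + (1 - r) * v) / (-y) ≤ 1 - v / r := by
      rw [div_le_iff₀ (by linarith : (0:ℝ) < -y)]
      have hfac : 0 ≤ v * ((r - 1) * (-(y + r))) :=
        mul_nonneg hv0 (mul_nonneg (by linarith) (by linarith))
      rw [show (1 : ℝ) - v / r = (r - v) / r by field_simp, div_mul_eq_mul_div,
        le_div_iff₀ hr0]
      nlinarith
    have hlog : Real.log (|y * (1 - v) + (1 - r) * v| / |y|) ≤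
        Real.log (1 - v / r) := by
      rw [habs1, habs2]
      exact Real.log_le_log hratio_pos hratio_le
    exact mul_le_mul_of_nonneg_left hlog (sq_nonneg y)
  have hIntf : IntervalIntegrable
      (fun v : ℝ => y ^ 2 * Real.log (|y * (1 - v) + (1 - r) * v| / |y|))
      MeasureTheory.volume 0 1 := by
    apply ContinuousOn.intervalIntegrable
    rw [Set.uIcc_of_le (by norm_num : (0:ℝ) ≤ 1)]
    apply ContinuousOn.mul continuousOn_const
    apply ContinuousOn.log
    · fun_prop
    · intro v hv
      have hv0 := hv.1
      have hv1 := hv.2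
      have hexpr : y * (1 - v) + (1 - r) * v < 0 := by
        have h1 : y * (1 - v) ≤ -r * (1 - v) :=
          mul_le_mul_of_nonneg_right hy (by linarith)
        nlinarith
      apply div_ne_zero (abs_ne_zero.mpr (by linarith)) (abs_ne_zero.mpr (by linarith))
  have hIntg : IntervalIntegrable (fun v : ℝ => y ^ 2 * Real.log (1 - v / r))
      MeasureTheory.volume 0 1 := hInt.const_mul _
  have hmono := intervalIntegral.integral_mono_on (by norm_num : (0:ℝ) ≤ 1)
    hIntf hIntg hkey
  calc ∫ v in (0:ℝ)..1, y ^ 2 * Real.log (|y * (1 - v) + (1 - r) * v| / |y|)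
      ≤ ∫ v in (0:ℝ)..1, y ^ 2 * Real.log (1 - v / r) := hmono
    _ = y ^ 2 * ∫ v in (0:ℝ)..1, Real.log (1 - v / r) := by
        rw [intervalIntegral.integral_const_mul]
    _ = -η * y ^ 2 := by rw [hη]; ring
end
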